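/- arXiv:2406.18870 — 6 statements merged into one kernel-verified Lean document; each statement's English description precedes it below -/
import Mathlib

section
/- Let d and c be positive integers with c ≤ 2^{d−2}. Then W(2^{d−1}−c) ≥ (2^d−1)/d − c/(d − log₂ c), where W(m) = ∑_{R ∈ R(m)} 1/(|R|+1) and R(m) is the family of the first m finite subsets of ℕ⁺ in colexicographic order. -/
/-!
Identify the `k`-th set in colex order with the set of binary digits of `k`. The first `2^n`
sets are then exactly the subsets of an `n`-set, so `W(2^n) = ∑ⱼ C(n,j)/(j+1) = (2^{n+1}-1)/(n+1)`.
The last `c` of them, numbered `2^n - 1 - j` for `j < c`, are the complements of the first `c`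
sets, which have at most `log₂ c` elements because `2^|S| ≤ j + 1` for the `j`-th set `S`.
So, with `d = n + 1`, each of the `c` removed sets has weight at most `1/(n + 1 - log₂ c)`.
-/

open Finset

/-- The `k`-th finite subset of `ℕ⁺` in colexicographic order (zero-indexed):
its elements are the positions (shifted by one) of the binary digits of `k`. -/
def decodeSet (k : ℕ) : Finset ℕ :=
  ((Finset.range (k + 1)).filter (fun i => k.testBit i)).image (· + 1)

/-- `Rfam m`: the family of the first `m` finite subsets of `ℕ⁺` in colexicographic order. -/
def Rfam (m : ℕ) : Finset (Finset ℕ) :=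
  (Finset.range m).image decodeSet

/-- `W(m) = ∑_{R ∈ R(m)} 1/(|R|+1)`. -/
noncomputable def Wfun (m : ℕ) : ℝ :=
  ∑ R ∈ Rfam m, 1 / (R.card + 1)

lemma toFinset_bitIndices_subset_range_iff {k n : ℕ} :
    k.bitIndices.toFinset ⊆ range n ↔ k < 2 ^ n := by
  constructor
  · intro h
    rw [← sum_toFinset_bitIndices_two_pow k]
    exact Nat.geomSum_lt le_rfl fun i hi => mem_range.1 (h hi)
  · intro hk i hi
    have h2i : 2 ^ i ≤ k := Nat.two_pow_le_of_mem_bitIndices (List.mem_toFinset.1 hi)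
    exact mem_range.2 ((Nat.pow_lt_pow_iff_right one_lt_two).1 (h2i.trans_lt hk))

lemma toFinset_bitIndices_two_pow_sub_one_sub {k n : ℕ} (hk : k < 2 ^ n) :
    (2 ^ n - 1 - k).bitIndices.toFinset = range n \ k.bitIndices.toFinset := by
  ext i
  rw [Nat.sub_sub, Nat.add_comm 1 k]
  simp [Nat.testBit_two_pow_sub_succ hk]

lemma two_pow_card_toFinset_bitIndices_le (k : ℕ) : 2 ^ #k.bitIndices.toFinset ≤ k + 1 := by
  rw [← card_powerset, ← card_range (k + 1)]
  refine card_le_card_of_injOn (fun s => ∑ i ∈ s, 2 ^ i) (fun s hs => ?_)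
    (equivBitIndices.symm.injective.injOn)
  rw [coe_range, Set.mem_Iio]
  calc ∑ i ∈ s, 2 ^ i ≤ ∑ i ∈ k.bitIndices.toFinset, 2 ^ i :=
        sum_le_sum_of_subset (mem_powerset.1 hs)
    _ < k + 1 := by rw [sum_toFinset_bitIndices_two_pow]; omega

lemma sum_range_two_pow_card_toFinset_bitIndices {M : Type*} [AddCommMonoid M] (f : ℕ → M)
    (n : ℕ) :
    ∑ k ∈ range (2 ^ n), f #k.bitIndices.toFinset =
      ∑ j ∈ range (n + 1), n.choose j • f j := by
  have hbij : ∑ k ∈ range (2 ^ n), f #k.bitIndices.toFinset =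
      ∑ s ∈ (range n).powerset, f #s := by
    refine sum_nbij' equivBitIndices equivBitIndices.symm (fun k hk => ?_) (fun s hs => ?_)
      (fun k _ => equivBitIndices.symm_apply_apply k)
      (fun s _ => equivBitIndices.apply_symm_apply s) (fun _ _ => rfl)
    · simpa [toFinset_bitIndices_subset_range_iff] using hk
    · simpa [← toFinset_bitIndices_subset_range_iff] using hs
  rw [hbij, sum_powerset_apply_card, card_range]

lemma sum_range_choose_div_add_one {K : Type*} [Field K] [CharZero K] (n : ℕ) :
    ∑ j ∈ range (n + 1), (n.choose j : K) / (j + 1) = (2 ^ (n + 1) - 1) / (n + 1) := by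
  have hterm : ∀ j : ℕ, (n.choose j : K) / (j + 1) = ((n + 1).choose (j + 1) : K) / (n + 1) := by
    intro j
    rw [div_eq_div_iff (Nat.cast_add_one_ne_zero j) (Nat.cast_add_one_ne_zero n), mul_comm]
    exact_mod_cast Nat.add_one_mul_choose_eq n j
  have hsum : ∑ j ∈ range (n + 1), ((n + 1).choose (j + 1) : K) + 1 = 2 ^ (n + 1) := by
    have := Nat.sum_range_choose (n + 1)
    rw [sum_range_succ'] at this
    exact_mod_cast this
  rw [sum_congr rfl fun j _ => hterm j, ← sum_div, ← hsum, add_sub_cancel_right]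

lemma filter_range_testBit_eq_toFinset_bitIndices (k : ℕ) :
    (range (k + 1)).filter (fun i => k.testBit i) = k.bitIndices.toFinset := by
  ext i
  simp only [mem_filter, mem_range, List.mem_toFinset, Nat.mem_bitIndices, and_iff_right_iff_imp]
  intro hi
  have h2i : 2 ^ i ≤ k := Nat.two_pow_le_of_mem_bitIndices (Nat.mem_bitIndices.2 hi)
  have : i < 2 ^ i := Nat.lt_two_pow_self
  omega

lemma decodeSet_eq_image (k : ℕ) : decodeSet k = k.bitIndices.toFinset.image (· + 1) := by
  rw [decodeSet, filter_range_testBit_eq_toFinset_bitIndices]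

lemma decodeSet_injective : Function.Injective decodeSet := by
  intro a b h
  rw [decodeSet_eq_image, decodeSet_eq_image] at h
  exact equivBitIndices.injective (image_injective (add_left_injective 1) h)

lemma Wfun_eq_sum_range (m : ℕ) :
    Wfun m = ∑ k ∈ range m, 1 / (#k.bitIndices.toFinset + 1 : ℝ) := by
  rw [Wfun, Rfam, sum_image decodeSet_injective.injOn]
  refine sum_congr rfl fun k _ => ?_
  rw [decodeSet_eq_image, card_image_of_injective _ (add_left_injective 1)]

lemma Wfun_two_pow (n : ℕ) : Wfun (2 ^ n) = (2 ^ (n + 1) - 1) / (n + 1) := by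
  rw [Wfun_eq_sum_range, sum_range_two_pow_card_toFinset_bitIndices (fun j => 1 / (j + 1 : ℝ)),
    ← sum_range_choose_div_add_one]
  simp only [nsmul_eq_mul, mul_one_div]

lemma natCast_le_logb_two_of_two_pow_le {m c : ℕ} (h : 2 ^ m ≤ c) : (m : ℝ) ≤ Real.logb 2 c := by
  have hc : (0 : ℝ) < c := by exact_mod_cast (Nat.two_pow_pos m).trans_le h
  rw [Real.le_logb_iff_rpow_le one_lt_two hc, Real.rpow_natCast]
  exact_mod_cast h

lemma logb_two_le_natCast_of_le_two_pow {m c : ℕ} (h : c ≤ 2 ^ m) : Real.logb 2 c ≤ m := by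
  rcases Nat.eq_zero_or_pos c with rfl | hc
  · simp
  rw [Real.logb_le_iff_le_rpow one_lt_two (by exact_mod_cast hc), Real.rpow_natCast]
  exact_mod_cast h

lemma sub_logb_le_card_toFinset_bitIndices_add_one {n c k : ℕ} (hk : k ∈ Ico (2 ^ n - c) (2 ^ n)) :
    n + 1 - Real.logb 2 c ≤ #k.bitIndices.toFinset + 1 := by
  obtain ⟨hck, hkn⟩ := mem_Ico.1 hk
  have hcard : #(2 ^ n - 1 - k).bitIndices.toFinset + #k.bitIndices.toFinset = n := by
    rw [toFinset_bitIndices_two_pow_sub_one_sub hkn,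
      card_sdiff_add_card_eq_card (toFinset_bitIndices_subset_range_iff.2 hkn), card_range]
  have hlog : (#(2 ^ n - 1 - k).bitIndices.toFinset : ℝ) ≤ Real.logb 2 c :=
    natCast_le_logb_two_of_two_pow_le <|
      (two_pow_card_toFinset_bitIndices_le _).trans (by omega)
  have hcard' : (#(2 ^ n - 1 - k).bitIndices.toFinset : ℝ) + #k.bitIndices.toFinset = n := by
    exact_mod_cast hcard
  linarith

lemma sum_Ico_two_pow_sub_le {n c : ℕ} (hc : c ≤ 2 ^ n) :
    ∑ k ∈ Ico (2 ^ n - c) (2 ^ n), 1 / (#k.bitIndices.toFinset + 1 : ℝ) ≤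
      c / (n + 1 - Real.logb 2 c) := by
  have hpos : (0 : ℝ) < n + 1 - Real.logb 2 c := by
    linarith [logb_two_le_natCast_of_le_two_pow hc]
  calc ∑ k ∈ Ico (2 ^ n - c) (2 ^ n), 1 / (#k.bitIndices.toFinset + 1 : ℝ)
      ≤ #(Ico (2 ^ n - c) (2 ^ n)) • (1 / (n + 1 - Real.logb 2 c)) :=
        sum_le_card_nsmul _ _ _ fun k hk =>
          one_div_le_one_div_of_le hpos (sub_logb_le_card_toFinset_bitIndices_add_one hk)
    _ = c / (n + 1 - Real.logb 2 c) := by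
        rw [Nat.card_Ico, Nat.sub_sub_self hc, nsmul_eq_mul, mul_one_div]

theorem stmt_6_general (d c : ℕ) (hd : 1 ≤ d) (hcd : c ≤ 2 ^ (d - 2)) :
    (2 ^ d - 1) / (d : ℝ) - c / (d - Real.logb 2 c) ≤ Wfun (2 ^ (d - 1) - c) := by
  obtain ⟨n, rfl⟩ : ∃ n, d = n + 1 := ⟨d - 1, by omega⟩
  have hc : c ≤ 2 ^ n := hcd.trans (Nat.pow_le_pow_right two_pos (by omega))
  have hsplit := sum_range_add_sum_Ico (fun k => 1 / (#k.bitIndices.toFinset + 1 : ℝ))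
    (Nat.sub_le (2 ^ n) c)
  rw [← Wfun_eq_sum_range, ← Wfun_eq_sum_range, Wfun_two_pow] at hsplit
  rw [Nat.add_sub_cancel]
  push_cast
  linarith [sum_Ico_two_pow_sub_le hc]

/-- for `1 ≤ c ≤ 2^{d-2}`,
`W(2^{d-1} - c) ≥ (2^d - 1)/d - c/(d - log₂ c)`. -/
theorem stmt_6 (d c : ℕ) (hd : 1 ≤ d) (hc : 1 ≤ c) (hcd : c ≤ 2 ^ (d - 2)) :
    (2 ^ d - 1) / (d : ℝ) - c / (d - Real.logb 2 c) ≤ Wfun (2 ^ (d - 1) - c) :=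
  stmt_6_general d c hd hcd
end

section
/- For d ≥ 5, 1 ≤ c ≤ d−1, and n = dk (k a positive integer), let U₁,…,U_k partition an n-set V into d-sets, and for each i pick any family G_i ⊆ 2^{U_i} with |G_i| = c−1 not containing the empty set. Then the family F = {A ⊆ V : A ∈ 2^{U_i} ∖ G_i for some i} ∪ {∅} satisfies |F| = (n/d)(2^d − c) + 1 and every vertex of V has degree at least 2^{d−1} − c + 1 in F (the degree when G_i consists of sets avoiding the vertex being exactly 2^{d−1}). -/
/-
A vertex `x` lies in exactly one block `U i`, and every member of `F` containing `x` is a subset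
of `U i`. So the degree of `x` is `2^(d-1)` (the subsets of `U i` through `x`)
minus the number of members of `G i` through `x`, which is at most `c - 1`
(and `c ≤ d - 1 < 2^(d-1)` keeps the natural-number subtraction exact). Since the blocks are
disjoint, the nonempty members of the different blocks are distinct, and each block contributes
`2^d - (c - 1) - 1 = 2^d - c` of them.
-/

open Finset

/-- The degree of `x` in `F`. -/
def deg {α : Type*} [DecidableEq α] (F : Finset (Finset α)) (x : α) : ℕ :=
  (F.filter (fun A => x ∈ A)).card

open Function

section Degree

variable {α ι : Type*} [DecidableEq α]

lemma deg_le_card (F : Finset (Finset α)) (x : α) : deg F x ≤ #F :=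
  card_filter_le _ _

lemma deg_eq_zero {F : Finset (Finset α)} {x : α} (h : ∀ A ∈ F, x ∉ A) : deg F x = 0 :=
  card_eq_zero.2 (filter_eq_empty_iff.2 h)

lemma deg_sdiff_of_subset {F G : Finset (Finset α)} (h : G ⊆ F) (x : α) :
    deg (F \ G) x = deg F x - deg G x := by
  have hfilter : (F \ G).filter (fun A => x ∈ A) =
      F.filter (fun A => x ∈ A) \ G.filter (fun A => x ∈ A) := by
    ext A
    simp only [mem_filter, mem_sdiff]
    tauto
  rw [deg, hfilter, card_sdiff_of_subset (filter_subset_filter _ h), deg, deg]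

lemma deg_powerset {s : Finset α} {x : α} (hx : x ∈ s) : deg s.powerset x = 2 ^ (#s - 1) := by
  have himage : s.powerset.filter (fun A => x ∈ A) = (s.erase x).powerset.image (insert x) := by
    ext A
    simp only [mem_filter, mem_powerset, mem_image, subset_erase]
    constructor
    · rintro ⟨hAs, hxA⟩
      exact ⟨A.erase x, ⟨(erase_subset x A).trans hAs, notMem_erase x A⟩, insert_erase hxA⟩
    · rintro ⟨B, ⟨hBs, -⟩, rfl⟩
      exact ⟨insert_subset hx hBs, mem_insert_self x B⟩
  have hinj : Set.InjOn (insert x) ((s.erase x).powerset : Set (Finset α)) :=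
    insert_erase_invOn.2.injOn.mono fun B hB =>
      notMem_mono (mem_powerset.1 (mem_coe.1 hB)) (notMem_erase x s)
  rw [deg, himage, card_image_of_injOn hinj, card_powerset, card_erase_of_mem hx]

section Blocks

variable [Fintype ι] {U : ι → Finset α} {B : ι → Finset (Finset α)}

lemma deg_biUnion_union_empty (hdisj : Pairwise (Disjoint on U))
    (hB : ∀ i, B i ⊆ (U i).powerset) {i : ι} {x : α} (hx : x ∈ U i) :
    deg (univ.biUnion B ∪ {∅}) x = deg (B i) x := by
  unfold deg
  congr 1
  ext A
  simp only [mem_filter, mem_union, mem_biUnion, mem_univ, true_and, mem_singleton]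
  constructor
  · rintro ⟨⟨j, hA⟩ | rfl, hxA⟩
    · obtain rfl : j = i := by
        by_contra hji
        exact disjoint_left.1 (hdisj hji) (mem_powerset.1 (hB j hA) hxA) hx
      exact ⟨hA, hxA⟩
    · exact absurd hxA (notMem_empty x)
  · rintro ⟨hA, hxA⟩
    exact ⟨Or.inl ⟨i, hA⟩, hxA⟩

lemma pairwiseDisjoint_erase_empty (hdisj : Pairwise (Disjoint on U))
    (hB : ∀ i, B i ⊆ (U i).powerset) :
    ((univ : Finset ι) : Set ι).PairwiseDisjoint fun i => (B i).erase ∅ := by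
  intro i _ j _ hij
  refine disjoint_left.2 fun A hAi hAj => (mem_erase.1 hAi).1 ?_
  have hAU : ∀ {l}, A ∈ (B l).erase ∅ → A ⊆ U l := fun h =>
    mem_powerset.1 (hB _ (mem_of_mem_erase h))
  exact disjoint_self.1 ((hdisj hij).mono (hAU hAi) (hAU hAj))

lemma card_biUnion_union_empty (hdisj : Pairwise (Disjoint on U))
    (hB : ∀ i, B i ⊆ (U i).powerset) :
    #(univ.biUnion B ∪ {∅}) = ∑ i, #((B i).erase ∅) + 1 := by
  rw [← card_erase_add_one (mem_union_right _ (mem_singleton_self ∅)), erase_union_distrib,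
    erase_singleton, union_empty, erase_biUnion,
    card_biUnion (pairwiseDisjoint_erase_empty hdisj hB)]

end Blocks

end Degree

theorem stmt_8_general {α : Type*} [DecidableEq α] (d c k n : ℕ)
    (hc1 : 1 ≤ c) (hcd : c ≤ d - 1) (hn : n = d * k)
    (V : Finset α)
    (U : Fin k → Finset α)
    (hdisj : ∀ i j, i ≠ j → Disjoint (U i) (U j))
    (hcover : Finset.univ.biUnion U = V)
    (hsize : ∀ i, (U i).card = d)
    (G : Fin k → Finset (Finset α))
    (hG : ∀ i, G i ⊆ (U i).powerset)
    (hGcard : ∀ i, (G i).card = c - 1)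
    (hGne : ∀ i, (∅ : Finset α) ∉ G i) :
    let F := Finset.univ.biUnion (fun i => (U i).powerset \ G i) ∪ {∅}
    F.card = (n / d) * (2 ^ d - c) + 1
    ∧ (∀ x ∈ V, 2 ^ (d - 1) - c + 1 ≤ deg F x)
    ∧ (∀ x ∈ V, (∀ i, ∀ A ∈ G i, x ∉ A) → deg F x = 2 ^ (d - 1)) := by
  intro F
  have hdisj' : Pairwise (Disjoint on U) := fun i j => hdisj i j
  have hB : ∀ i, (U i).powerset \ G i ⊆ (U i).powerset := fun _ => sdiff_subset
  have hdeg : ∀ x ∈ V, ∃ i, deg F x = 2 ^ (d - 1) - deg (G i) x := by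
    intro x hx
    obtain ⟨i, -, hxi⟩ := mem_biUnion.1 (hcover ▸ hx)
    refine ⟨i, ?_⟩
    rw [deg_biUnion_union_empty hdisj' hB hxi, deg_sdiff_of_subset (hG i), deg_powerset hxi,
      hsize i]
  refine ⟨?_, fun x hx => ?_, fun x hx hGx => ?_⟩
  · have hblock : ∀ i, #(((U i).powerset \ G i).erase ∅) = 2 ^ d - c := fun i => by
      rw [card_erase_of_mem (mem_sdiff.2 ⟨empty_mem_powerset _, hGne i⟩),
        card_sdiff_of_subset (hG i), card_powerset, hsize i, hGcard i]
      omega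
    rw [card_biUnion_union_empty hdisj' hB, Finset.sum_congr rfl fun i _ => hblock i, sum_const,
      card_univ, Fintype.card_fin, smul_eq_mul, hn, Nat.mul_div_cancel_left k (by omega)]
  · obtain ⟨i, hi⟩ := hdeg x hx
    have hGx : deg (G i) x ≤ c - 1 := hGcard i ▸ deg_le_card (G i) x
    have hc : c ≤ 2 ^ (d - 1) := hcd.trans (Nat.lt_two_pow_self).le
    omega
  · obtain ⟨i, hi⟩ := hdeg x hx
    rw [hi, deg_eq_zero (hGx i), Nat.sub_zero]

/-- Construction 2.3. Partition an `n`-set `V` into `k` blocks of size `d`,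
remove `c-1` nonempty sets from each block's powerset.  The resulting family has
`(n/d)(2^d - c) + 1` members and minimum degree at least `2^{d-1} - c + 1`; a vertex
avoided by all removed sets of its block has degree exactly `2^{d-1}`. -/
theorem stmt_8 {α : Type*} [DecidableEq α] (d c k n : ℕ)
    (hd : 5 ≤ d) (hc1 : 1 ≤ c) (hcd : c ≤ d - 1) (hk : 1 ≤ k) (hn : n = d * k)
    (V : Finset α) (hV : V.card = n)
    (U : Fin k → Finset α)
    (hUV : ∀ i, U i ⊆ V)
    (hdisj : ∀ i j, i ≠ j → Disjoint (U i) (U j))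
    (hcover : Finset.univ.biUnion U = V)
    (hsize : ∀ i, (U i).card = d)
    (G : Fin k → Finset (Finset α))
    (hG : ∀ i, G i ⊆ (U i).powerset)
    (hGcard : ∀ i, (G i).card = c - 1)
    (hGne : ∀ i, (∅ : Finset α) ∉ G i) :
    let F := Finset.univ.biUnion (fun i => (U i).powerset \ G i) ∪ {∅}
    F.card = (n / d) * (2 ^ d - c) + 1
    ∧ (∀ x ∈ V, 2 ^ (d - 1) - c + 1 ≤ deg F x)
    ∧ (∀ x ∈ V, (∀ i, ∀ A ∈ G i, x ∉ A) → deg F x = 2 ^ (d - 1)) :=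
  stmt_8_general d c k n hc1 hcd hn V U hdisj hcover hsize G hG hGcard hGne
end

section
/- Let F ⊆ 2^V be a hereditary family in which every set has size at most 4 and δ(F) ≥ 12. Suppose x ∈ V satisfies f₁(x) = 4, f₂(x) = 5, f₃(x) = 2, where f_i(x) is the number of i-element sets in the link F(x). Then the two 4-element sets Q₁, Q₂ of F containing x satisfy |Q₁ ∩ Q₂| = 3, and F(x) = {A ∖ {x} : x ∈ A ⊆ Q_i for some i ∈ {1,2}}. -/
open Finset

/-- The link of `x` in `F`. -/
def link {α : Type*} [DecidableEq α] (F : Finset (Finset α)) (x : α) : Finset (Finset α) :=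
  (F.filter (fun A => x ∈ A)).image (fun A => A.erase x)

/-- `f_i(x)`: the number of `i`-element sets in the link of `x`. -/
def fcount {α : Type*} [DecidableEq α] (F : Finset (Finset α)) (x : α) (i : ℕ) : ℕ :=
  ((link F x).filter (fun H => H.card = i)).card

lemma mem_link_iff {α : Type*} [DecidableEq α] {F : Finset (Finset α)} {x : α} {H : Finset α} :
    H ∈ link F x ↔ x ∉ H ∧ insert x H ∈ F := by
  constructor
  · intro h
    simp only [link, mem_image, mem_filter] at h
    obtain ⟨A, ⟨hA, hxA⟩, rfl⟩ := h
    exact ⟨notMem_erase _ _, by rwa [insert_erase hxA]⟩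
  · rintro ⟨hx, hF⟩
    simp only [link, mem_image, mem_filter]
    exact ⟨insert x H, ⟨hF, mem_insert_self _ _⟩, by rw [erase_insert hx]⟩

lemma powerset_inter' {α : Type*} [DecidableEq α] (s t : Finset α) :
    s.powerset ∩ t.powerset = (s ∩ t).powerset := by
  ext u
  simp only [mem_inter, mem_powerset, subset_inter_iff]

/-- structure of the link of a mini-weight vertex. -/
theorem stmt_11 {α : Type*} [DecidableEq α] (V : Finset α) (F : Finset (Finset α))
    (hF : F ⊆ V.powerset)
    (hered : ∀ A ∈ F, ∀ B ⊆ A, B ∈ F)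
    (hsize : ∀ A ∈ F, A.card ≤ 4)
    (hdelta : ∀ x ∈ V, 12 ≤ deg F x)
    (x : α) (hx : x ∈ V)
    (hf1 : fcount F x 1 = 4) (hf2 : fcount F x 2 = 5) (hf3 : fcount F x 3 = 2) :
    ∀ Q₁ ∈ F, ∀ Q₂ ∈ F, Q₁.card = 4 → Q₂.card = 4 → x ∈ Q₁ → x ∈ Q₂ → Q₁ ≠ Q₂ →
      (Q₁ ∩ Q₂).card = 3
      ∧ link F x
          = ((Q₁.powerset ∪ Q₂.powerset).filter (fun A => x ∈ A)).image
              (fun A => A.erase x) := by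
  intro Q₁ hQ₁ Q₂ hQ₂ hc1 hc2 hx1 hx2 hne
  set L := link F x with hLdef
  have hdown : ∀ H ∈ L, ∀ H' ⊆ H, H' ∈ L := by
    intro H hH H' hH'
    rw [hLdef, mem_link_iff] at hH ⊢
    exact ⟨fun hx' => hH.1 (hH' hx'),
      hered _ hH.2 _ (insert_subset_insert _ hH')⟩
  set H₁ := Q₁.erase x with hH1def
  set H₂ := Q₂.erase x with hH2def
  have hQ1e : insert x H₁ = Q₁ := insert_erase hx1
  have hQ2e : insert x H₂ = Q₂ := insert_erase hx2
  have hH1L : H₁ ∈ L := mem_link_iff.mpr ⟨notMem_erase _ _, by rwa [hQ1e]⟩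
  have hH2L : H₂ ∈ L := mem_link_iff.mpr ⟨notMem_erase _ _, by rwa [hQ2e]⟩
  have hc1' : H₁.card = 3 := by rw [hH1def, card_erase_of_mem hx1, hc1]
  have hc2' : H₂.card = 3 := by rw [hH2def, card_erase_of_mem hx2, hc2]
  have hHne : H₁ ≠ H₂ := fun h => hne (by rw [← hQ1e, ← hQ2e, h])
  -- every member of the link has card ≤ 3
  have hcard3 : ∀ H ∈ L, H.card ≤ 3 := by
    intro H hH
    rw [hLdef, mem_link_iff] at hH
    have h4 := hsize _ hH.2
    rw [card_insert_of_notMem hH.1] at h4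
    omega
  -- step 1 : |H₁ ∩ H₂| = 2
  have hsub1 : (H₁ ∪ H₂).image (fun a => ({a} : Finset α))
      ⊆ L.filter (fun H => H.card = 1) := by
    intro s hs
    simp only [mem_image] at hs
    obtain ⟨a, ha, rfl⟩ := hs
    refine mem_filter.mpr ⟨?_, card_singleton a⟩
    rcases mem_union.mp ha with h | h
    · exact hdown _ hH1L _ (singleton_subset_iff.mpr h)
    · exact hdown _ hH2L _ (singleton_subset_iff.mpr h)
  have hle4 : (H₁ ∪ H₂).card ≤ 4 := by
    have h := card_le_card hsub1
    rw [card_image_of_injective _ (fun a b hab => by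
      simpa using hab : Function.Injective (fun a => ({a} : Finset α)))] at h
    have : (L.filter (fun H => H.card = 1)).card = 4 := hf1
    omega
  have htle : (H₁ ∩ H₂).card ≤ 2 := by
    by_contra h
    push_neg at h
    have h3 : H₁.card ≤ (H₁ ∩ H₂).card := by omega
    have he1 : H₁ ∩ H₂ = H₁ := eq_of_subset_of_card_le inter_subset_left h3
    have he2 : H₁ = H₂ :=
      eq_of_subset_of_card_le (he1 ▸ inter_subset_right) (by omega)
    exact hHne he2
  have hsum : (H₁ ∪ H₂).card + (H₁ ∩ H₂).card = 6 := by
    rw [card_union_add_card_inter, hc1', hc2']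
  have ht2 : (H₁ ∩ H₂).card = 2 := by omega
  have hu4 : (H₁ ∪ H₂).card = 4 := by omega
  -- |Q₁ ∩ Q₂| = 3
  have hQint : Q₁ ∩ Q₂ = insert x (H₁ ∩ H₂) := by
    rw [← hQ1e, ← hQ2e]
    ext a
    simp only [mem_inter, mem_insert]
    tauto
  have hxnot : x ∉ H₁ ∩ H₂ := fun h => notMem_erase x Q₁ (mem_inter.mp h).1
  have hQint3 : (Q₁ ∩ Q₂).card = 3 := by
    rw [hQint, card_insert_of_notMem hxnot, ht2]
  refine ⟨hQint3, ?_⟩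
  -- step 2 : L = powerset H₁ ∪ powerset H₂
  set T := H₁.powerset ∪ H₂.powerset with hTdef
  have hTL : T ⊆ L := by
    intro H hH
    rcases mem_union.mp hH with h | h
    · exact hdown _ hH1L _ (mem_powerset.mp h)
    · exact hdown _ hH2L _ (mem_powerset.mp h)
  have hTcard : T.card = 12 := by
    have := card_union_add_card_inter H₁.powerset H₂.powerset
    rw [powerset_inter', card_powerset, card_powerset, card_powerset, hc1', hc2', ht2] at this
    simpa [hTdef] using by omega
  have hLcard : L.card = 12 := by
    have hfib : L.card = ∑ i ∈ Finset.range 4, (L.filter (fun H => H.card = i)).card := by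
      apply card_eq_sum_card_fiberwise
      intro H hH
      exact mem_range.mpr (by have := hcard3 H hH; omega)
    have hf0 : (L.filter (fun H => H.card = 0)).card = 1 := by
      have : L.filter (fun H => H.card = 0) = {∅} := by
        ext H
        simp only [mem_filter, mem_singleton, card_eq_zero]
        constructor
        · rintro ⟨_, rfl⟩; rfl
        · rintro rfl; exact ⟨hdown _ hH1L _ (empty_subset _), rfl⟩
      rw [this, card_singleton]
    have hf1' : (L.filter (fun H => H.card = 1)).card = 4 := hf1
    have hf2' : (L.filter (fun H => H.card = 2)).card = 5 := hf2
    have hf3' : (L.filter (fun H => H.card = 3)).card = 2 := hf3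
    rw [hfib]
    rw [Finset.sum_range_succ, Finset.sum_range_succ, Finset.sum_range_succ,
      Finset.sum_range_one, hf0, hf1', hf2', hf3']
  have hLT : L = T := (eq_of_subset_of_card_le hTL (by omega)).symm
  -- identify T with the image expression
  have himg : ((Q₁.powerset ∪ Q₂.powerset).filter (fun A => x ∈ A)).image
      (fun A => A.erase x) = T := by
    ext H
    simp only [mem_image, mem_filter, mem_union, mem_powerset, hTdef]
    constructor
    · rintro ⟨A, ⟨hA | hA, hxA⟩, rfl⟩
      · exact Or.inl (erase_subset_erase x hA)
      · exact Or.inr (erase_subset_erase x hA)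
    · intro h
      have hxH : x ∉ H := by
        rcases h with h | h
        · exact fun hxh => notMem_erase x Q₁ (h hxh)
        · exact fun hxh => notMem_erase x Q₂ (h hxh)
      refine ⟨insert x H, ⟨?_, mem_insert_self _ _⟩, erase_insert hxH⟩
      rcases h with h | h
      · exact Or.inl (by rw [← hQ1e]; exact insert_subset_insert _ h)
      · exact Or.inr (by rw [← hQ2e]; exact insert_subset_insert _ h)
  exact hLT.trans himg.symm
end

section
/- Let F ⊆ 2^V be a hereditary family in which every set has size at most 4 and δ(F) ≥ 12. If every 4-element set of F containing a mini-weight vertex x must intersect any other 4-element set of F through x in exactly 3 elements (as guaranteed by the mini-weight structure), then no 4-element set Q ∈ F can have all four of its vertices mini-weight. -/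
open Finset

/-- A vertex is mini-weight if `f₁(x) = 4`, `f₂(x) = 5`, `f₃(x) = 2`. -/
def MiniWeight {α : Type*} [DecidableEq α] (F : Finset (Finset α)) (x : α) : Prop :=
  fcount F x 1 = 4 ∧ fcount F x 2 = 5 ∧ fcount F x 3 = 2

/-- A mini-weight vertex lies on exactly two 4-sets of `F`. -/
lemma count4 {α : Type*} [DecidableEq α] (F : Finset (Finset α)) (x : α)
    (h : MiniWeight F x) :
    (F.filter (fun A => x ∈ A ∧ A.card = 4)).card = 2 := by
  have h3 : fcount F x 3 = 2 := h.2.2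
  rw [← h3]
  unfold fcount link
  rw [Finset.filter_image]
  rw [Finset.card_image_of_injOn]
  · congr 1
    ext A
    simp only [mem_filter, and_assoc]
    constructor
    · rintro ⟨hA, hx, h4⟩
      exact ⟨hA, hx, by rw [card_erase_of_mem hx, h4]⟩
    · rintro ⟨hA, hx, h4⟩
      refine ⟨hA, hx, ?_⟩
      rw [card_erase_of_mem hx] at h4
      omega
  · intro A hA B hB hAB
    simp only [coe_filter, Set.mem_setOf_eq, mem_filter] at hA hB
    have : insert x (A.erase x) = insert x (B.erase x) := by simp only at hAB; rw [hAB]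
    rwa [insert_erase hA.1.2, insert_erase hB.1.2] at this

/-- In a 2-element finset, any element has a companion. -/
lemma other_elt {β : Type*} [DecidableEq β] {s : Finset β} (h : s.card = 2) {Q : β}
    (hQ : Q ∈ s) : ∃ Q' ∈ s, Q' ≠ Q := by
  obtain ⟨a, b, hab, rfl⟩ := Finset.card_eq_two.mp h
  rcases mem_insert.mp hQ with rfl | h'
  · exact ⟨b, by simp, fun hc => hab hc.symm⟩
  · rw [mem_singleton] at h'
    subst h'
    exact ⟨a, by simp, hab⟩

/-- no 4-element set of `F` can have all four of its vertices mini-weight. -/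
theorem stmt_12 {α : Type*} [DecidableEq α] (V : Finset α) (F : Finset (Finset α))
    (hF : F ⊆ V.powerset)
    (hered : ∀ A ∈ F, ∀ B ⊆ A, B ∈ F)
    (hsize : ∀ A ∈ F, A.card ≤ 4)
    (hdelta : ∀ x ∈ V, 12 ≤ deg F x)
    (hstruct : ∀ x ∈ V, MiniWeight F x →
      ∀ Q₁ ∈ F, ∀ Q₂ ∈ F, Q₁.card = 4 → Q₂.card = 4 → x ∈ Q₁ → x ∈ Q₂ → Q₁ ≠ Q₂ →
        (Q₁ ∩ Q₂).card = 3) :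
    ∀ Q ∈ F, Q.card = 4 → ∃ y ∈ Q, ¬ MiniWeight F y := by
  intro Q hQ hQ4
  by_contra hc
  push_neg at hc
  have hQV : Q ⊆ V := mem_powerset.mp (hF hQ)
  -- pick any x ∈ Q
  have hQne : Q.Nonempty := card_pos.mp (by omega)
  obtain ⟨x, hx⟩ := hQne
  have hxmw := hc x hx
  -- the two 4-sets containing x
  have hcard2x := count4 F x hxmw
  have hQmemx : Q ∈ F.filter (fun A => x ∈ A ∧ A.card = 4) :=
    mem_filter.mpr ⟨hQ, hx, hQ4⟩
  obtain ⟨Q', hQ'mem, hQ'ne⟩ := other_elt hcard2x hQmemx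
  rw [mem_filter] at hQ'mem
  obtain ⟨hQ'F, hxQ', hQ'4⟩ := hQ'mem
  have hint : (Q ∩ Q').card = 3 :=
    hstruct x (hQV hx) hxmw Q hQ Q' hQ'F hQ4 hQ'4 hx hxQ' hQ'ne.symm
  -- pick z ∈ Q \ Q'
  have hzex : ∃ z ∈ Q, z ∉ Q' := by
    by_contra hno
    push_neg at hno
    have : Q ∩ Q' = Q := inter_eq_left.mpr hno
    rw [this, hQ4] at hint
    omega
  obtain ⟨z, hzQ, hzQ'⟩ := hzex
  have hzmw := hc z hzQ
  have hcard2z := count4 F z hzmw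
  have hQmemz : Q ∈ F.filter (fun A => z ∈ A ∧ A.card = 4) :=
    mem_filter.mpr ⟨hQ, hzQ, hQ4⟩
  obtain ⟨Qz, hQzmem, hQzne⟩ := other_elt hcard2z hQmemz
  rw [mem_filter] at hQzmem
  obtain ⟨hQzF, hzQz, hQz4⟩ := hQzmem
  have hintz : (Q ∩ Qz).card = 3 :=
    hstruct z (hQV hzQ) hzmw Q hQ Qz hQzF hQ4 hQz4 hzQ hzQz hQzne.symm
  have hQzQ' : Qz ≠ Q' := fun h => hzQ' (h ▸ hzQz)
  -- (Q∩Q') and (Q∩Qz) intersect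
  have hsub : (Q ∩ Q') ∪ (Q ∩ Qz) ⊆ Q :=
    union_subset (inter_subset_left) (inter_subset_left)
  have hunle : ((Q ∩ Q') ∪ (Q ∩ Qz)).card ≤ 4 := hQ4 ▸ card_le_card hsub
  have hie := Finset.card_inter_add_card_union (Q ∩ Q') (Q ∩ Qz)
  have hwex : ((Q ∩ Q') ∩ (Q ∩ Qz)).Nonempty := by
    apply card_pos.mp
    omega
  obtain ⟨w, hw⟩ := hwex
  simp only [mem_inter] at hw
  obtain ⟨⟨hwQ, hwQ'⟩, _, hwQz⟩ := hw
  -- w lies in three distinct 4-sets: Q, Q', Qz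
  have hwmw := hc w hwQ
  have hcard2w := count4 F w hwmw
  have htriple : ({Q, Q', Qz} : Finset (Finset α)) ⊆
      F.filter (fun A => w ∈ A ∧ A.card = 4) := by
    intro A hA
    simp only [mem_insert, mem_singleton] at hA
    rcases hA with rfl | rfl | rfl
    · exact mem_filter.mpr ⟨hQ, hwQ, hQ4⟩
    · exact mem_filter.mpr ⟨hQ'F, hwQ', hQ'4⟩
    · exact mem_filter.mpr ⟨hQzF, hwQz, hQz4⟩
  have h3c : ({Q, Q', Qz} : Finset (Finset α)).card = 3 := by
    rw [card_insert_of_notMem, card_insert_of_notMem, card_singleton]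
    · simp only [mem_singleton]
      exact fun h => hQzQ' h.symm
    · simp only [mem_insert, mem_singleton]
      push_neg
      exact ⟨hQ'ne.symm, fun h => hQzne (h.symm)⟩
  have := card_le_card htriple
  rw [h3c, hcard2w] at this
  omega
end

section
/- Let F ⊆ 2^V be a hereditary family with all sets of size at most 4 and δ(F) ≥ 12, and let x ∈ V with f₃(x) = 1 and f₁(x) = 4. If Q = {x,y₁,y₂,y₃} is the unique 4-set of F containing x and N(x) = {x,y₁,y₂,y₃,z}, then F(x) = 2^{{y₁,y₂,y₃}} ∪ {{z}, {y₁,z}, {y₂,z}, {y₃,z}}. -/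
open Finset

/-- The neighborhood `N(x) = ⋃_{x ∈ A ∈ F} A`. -/
def nbhd {α : Type*} [DecidableEq α] (F : Finset (Finset α)) (x : α) : Finset α :=
  (F.filter (fun A => x ∈ A)).biUnion id

lemma mem_link' {α : Type*} [DecidableEq α] {F : Finset (Finset α)} {x : α} {B : Finset α} :
    B ∈ link F x ↔ x ∉ B ∧ insert x B ∈ F := by
  simp only [link, Finset.mem_image, Finset.mem_filter]
  constructor
  · rintro ⟨A, ⟨hA, hxA⟩, rfl⟩
    exact ⟨Finset.notMem_erase _ _, by rwa [Finset.insert_erase hxA]⟩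
  · rintro ⟨hxB, hFm⟩
    exact ⟨insert x B, ⟨hFm, Finset.mem_insert_self _ _⟩, by rw [Finset.erase_insert hxB]⟩

lemma card_link' {α : Type*} [DecidableEq α] (F : Finset (Finset α)) (x : α) :
    (link F x).card = deg F x := by
  apply Finset.card_image_of_injOn
  intro A hA B hB h
  simp only [Finset.mem_coe, Finset.mem_filter] at hA hB
  dsimp at h
  rw [← Finset.insert_erase hA.2, h, Finset.insert_erase hB.2]

lemma c3le {α : Type*} [DecidableEq α] (a b c : α) : ({a,b,c} : Finset α).card ≤ 3 := by
  have h1 := Finset.card_insert_le a ({b,c} : Finset α)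
  have h2 := Finset.card_insert_le b ({c} : Finset α)
  simp only [Finset.card_singleton] at *
  omega

lemma distinct4 {α : Type*} [DecidableEq α] {a b c d : α}
    (h : ({a,b,c,d} : Finset α).card = 4) :
    a ≠ b ∧ a ≠ c ∧ a ≠ d ∧ b ≠ c ∧ b ≠ d ∧ c ≠ d := by
  refine ⟨?_, ?_, ?_, ?_, ?_, ?_⟩ <;> rintro rfl <;>
    [ (have hs : ({a,a,c,d} : Finset α) ⊆ {a,c,d} := by intro t ht; simp at ht ⊢; tauto);
      (have hs : ({a,b,a,d} : Finset α) ⊆ {a,b,d} := by intro t ht; simp at ht ⊢; tauto);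
      (have hs : ({a,b,c,a} : Finset α) ⊆ {a,b,c} := by intro t ht; simp at ht ⊢; tauto);
      (have hs : ({a,b,b,d} : Finset α) ⊆ {a,b,d} := by intro t ht; simp at ht ⊢; tauto);
      (have hs : ({a,b,c,b} : Finset α) ⊆ {a,b,c} := by intro t ht; simp at ht ⊢; tauto);
      (have hs : ({a,b,c,c} : Finset α) ⊆ {a,b,c} := by intro t ht; simp at ht ⊢; tauto)] <;>
    · have h1 := Finset.card_le_card hs
      have h2 := c3le (α := α)
      first
      | (have := c3le a c d; omega)
      | (have := c3le a b d; omega)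
      | (have := c3le a b c; omega)

set_option maxHeartbeats 1000000 in
/-- if `f₃(x) = 1`, `f₁(x) = 4`, `Q = {x,y₁,y₂,y₃}` is the 4-set of `F`
containing `x`, and `N(x) = {x,y₁,y₂,y₃,z}`, then
`F(x) = 2^{{y₁,y₂,y₃}} ∪ {{z},{y₁,z},{y₂,z},{y₃,z}}`. -/
theorem stmt_14 {α : Type*} [DecidableEq α] (V : Finset α) (F : Finset (Finset α))
    (hF : F ⊆ V.powerset)
    (hered : ∀ A ∈ F, ∀ B ⊆ A, B ∈ F)
    (hsize : ∀ A ∈ F, A.card ≤ 4)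
    (hdelta : ∀ x ∈ V, 12 ≤ deg F x)
    (x y₁ y₂ y₃ z : α) (hx : x ∈ V)
    (hf3 : fcount F x 3 = 1) (hf1 : fcount F x 1 = 4)
    (hQ : ({x, y₁, y₂, y₃} : Finset α) ∈ F)
    (hQcard : ({x, y₁, y₂, y₃} : Finset α).card = 4)
    (hN : nbhd F x = ({x, y₁, y₂, y₃, z} : Finset α))
    (hNcard : ({x, y₁, y₂, y₃, z} : Finset α).card = 5) :
    link F x = ({y₁, y₂, y₃} : Finset α).powerset
      ∪ {({z} : Finset α), {y₁, z}, {y₂, z}, {y₃, z}} := by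
  obtain ⟨hxy1, hxy2, hxy3, hy12, hy13, hy23⟩ := distinct4 hQcard
  -- z is distinct from all of x, y₁, y₂, y₃
  have hzQ : z ∉ ({x, y₁, y₂, y₃} : Finset α) := by
    intro hzm
    have hs : ({x, y₁, y₂, y₃, z} : Finset α) ⊆ {x, y₁, y₂, y₃} := by
      intro t ht
      simp only [Finset.mem_insert, Finset.mem_singleton] at ht hzm ⊢
      rcases ht with rfl | rfl | rfl | rfl | rfl
      · exact Or.inl rfl
      · exact Or.inr (Or.inl rfl)
      · exact Or.inr (Or.inr (Or.inl rfl))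
      · exact Or.inr (Or.inr (Or.inr rfl))
      · exact hzm
    have := Finset.card_le_card hs
    omega
  simp only [Finset.mem_insert, Finset.mem_singleton, not_or] at hzQ
  obtain ⟨hzx, hz1, hz2, hz3⟩ := hzQ
  -- card of the y-triple
  have hycard : ({y₁, y₂, y₃} : Finset α).card = 3 := by
    rw [Finset.card_insert_of_notMem (by simp [hy12, hy13]),
      Finset.card_insert_of_notMem (by simp [hy23]), Finset.card_singleton]
  -- {y₁,y₂,y₃} is in the link
  have hxny : x ∉ ({y₁, y₂, y₃} : Finset α) := by simp [hxy1, hxy2, hxy3]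
  have hYlink : ({y₁, y₂, y₃} : Finset α) ∈ link F x := by
    rw [mem_link']
    exact ⟨hxny, hQ⟩
  -- the unique 3-set in the link
  have h3unique : ∀ B ∈ link F x, B.card = 3 → B = ({y₁, y₂, y₃} : Finset α) := by
    intro B hB hBc
    have h1 : ({y₁, y₂, y₃} : Finset α) ∈ (link F x).filter (fun H => H.card = 3) :=
      Finset.mem_filter.2 ⟨hYlink, hycard⟩
    have h2 : B ∈ (link F x).filter (fun H => H.card = 3) :=
      Finset.mem_filter.2 ⟨hB, hBc⟩
    obtain ⟨a, ha⟩ := Finset.card_eq_one.1 hf3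
    rw [ha, Finset.mem_singleton] at h1 h2
    rw [h1, h2]
  -- link ⊆ RHS
  have hsub : link F x ⊆ ({y₁, y₂, y₃} : Finset α).powerset
      ∪ {({z} : Finset α), {y₁, z}, {y₂, z}, {y₃, z}} := by
    intro B hB
    obtain ⟨hxB, hins⟩ := mem_link'.1 hB
    have hBcard : B.card ≤ 3 := by
      have := hsize _ hins
      rw [Finset.card_insert_of_notMem hxB] at this
      omega
    have hBsub : B ⊆ ({y₁, y₂, y₃, z} : Finset α) := by
      intro b hb
      have hbN : b ∈ nbhd F x := by
        simp only [nbhd, Finset.mem_biUnion, Finset.mem_filter, id]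
        exact ⟨insert x B, ⟨hins, Finset.mem_insert_self _ _⟩, Finset.mem_insert_of_mem hb⟩
      rw [hN] at hbN
      simp only [Finset.mem_insert, Finset.mem_singleton] at hbN ⊢
      rcases hbN with rfl | h' | h' | h' | h'
      · exact absurd hb hxB
      · exact Or.inl h'
      · exact Or.inr (Or.inl h')
      · exact Or.inr (Or.inr (Or.inl h'))
      · exact Or.inr (Or.inr (Or.inr h'))
    by_cases hzB : z ∈ B
    · -- B contains z: at most one yᵢ, since B ≠ the unique 3-set
      have hB2 : B.card ≤ 2 := by
        by_contra hc
        have hB3 : B.card = 3 := by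
          omega
        have := h3unique B hB hB3
        rw [this] at hzB
        simp only [Finset.mem_insert, Finset.mem_singleton] at hzB
        rcases hzB with h | h | h
        exacts [hz1 h, hz2 h, hz3 h]
      have hone : ∀ i j : α, i ∈ B → j ∈ B → i ≠ z → j ≠ z → i = j := by
        intro i j hi hj hiz hjz
        by_contra hij
        have hsub3 : ({i, j, z} : Finset α) ⊆ B := by
          intro t ht
          simp only [Finset.mem_insert, Finset.mem_singleton] at ht
          rcases ht with rfl | rfl | rfl <;> assumption
        have hc3 : ({i, j, z} : Finset α).card = 3 := by
          rw [Finset.card_insert_of_notMem (by simp [hij, hiz]),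
            Finset.card_insert_of_notMem (by simp [hjz]), Finset.card_singleton]
        have := Finset.card_le_card hsub3
        omega
      simp only [Finset.mem_union, Finset.mem_insert, Finset.mem_singleton]
      by_cases h1B : y₁ ∈ B
      · right; right; left
        apply Finset.Subset.antisymm
        · intro t ht
          have := hBsub ht
          simp only [Finset.mem_insert, Finset.mem_singleton] at this ⊢
          rcases this with rfl | rfl | rfl | rfl
          · exact Or.inl rfl
          · exact absurd (hone _ _ h1B ht (Ne.symm hz1) (Ne.symm hz2)) hy12
          · exact absurd (hone _ _ h1B ht (Ne.symm hz1) (Ne.symm hz3)) hy13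
          · exact Or.inr rfl
        · intro t ht
          simp only [Finset.mem_insert, Finset.mem_singleton] at ht
          rcases ht with rfl | rfl <;> assumption
      · by_cases h2B : y₂ ∈ B
        · right; right; right; left
          apply Finset.Subset.antisymm
          · intro t ht
            have := hBsub ht
            simp only [Finset.mem_insert, Finset.mem_singleton] at this ⊢
            rcases this with rfl | rfl | rfl | rfl
            · exact absurd ht h1B
            · exact Or.inl rfl
            · exact absurd (hone _ _ h2B ht (Ne.symm hz2) (Ne.symm hz3)) hy23
            · exact Or.inr rfl
          · intro t ht
            simp only [Finset.mem_insert, Finset.mem_singleton] at ht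
            rcases ht with rfl | rfl <;> assumption
        · by_cases h3B : y₃ ∈ B
          · right; right; right; right
            apply Finset.Subset.antisymm
            · intro t ht
              have := hBsub ht
              simp only [Finset.mem_insert, Finset.mem_singleton] at this ⊢
              rcases this with rfl | rfl | rfl | rfl
              · exact absurd ht h1B
              · exact absurd ht h2B
              · exact Or.inl rfl
              · exact Or.inr rfl
            · intro t ht
              simp only [Finset.mem_insert, Finset.mem_singleton] at ht
              rcases ht with rfl | rfl <;> assumption
          · right; left
            apply Finset.Subset.antisymm
            · intro t ht
              have := hBsub ht
              simp only [Finset.mem_insert, Finset.mem_singleton] at this ⊢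
              rcases this with rfl | rfl | rfl | rfl
              · exact absurd ht h1B
              · exact absurd ht h2B
              · exact absurd ht h3B
              · rfl
            · intro t ht
              simp only [Finset.mem_singleton] at ht
              subst ht; exact hzB
    · -- z ∉ B : B ⊆ {y₁,y₂,y₃}
      apply Finset.mem_union_left
      rw [Finset.mem_powerset]
      intro b hb
      have := hBsub hb
      simp only [Finset.mem_insert, Finset.mem_singleton] at this ⊢
      rcases this with rfl | rfl | rfl | rfl
      · exact Or.inl rfl
      · exact Or.inr (Or.inl rfl)
      · exact Or.inr (Or.inr rfl)
      · exact absurd hb hzB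
  -- cardinality of RHS is 12
  have hE : ({({z} : Finset α), {y₁, z}, {y₂, z}, {y₃, z}} : Finset (Finset α)).card = 4 := by
    have d1 : ({z} : Finset α) ≠ {y₁, z} := by
      intro h; have : y₁ ∈ ({z} : Finset α) := h ▸ Finset.mem_insert_self _ _
      simp at this; exact hz1 this.symm
    have d2 : ({z} : Finset α) ≠ {y₂, z} := by
      intro h; have : y₂ ∈ ({z} : Finset α) := h ▸ Finset.mem_insert_self _ _
      simp at this; exact hz2 this.symm
    have d3 : ({z} : Finset α) ≠ {y₃, z} := by
      intro h; have : y₃ ∈ ({z} : Finset α) := h ▸ Finset.mem_insert_self _ _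
      simp at this; exact hz3 this.symm
    have d4 : ({y₁, z} : Finset α) ≠ {y₂, z} := by
      intro h; have : y₁ ∈ ({y₂, z} : Finset α) := h ▸ Finset.mem_insert_self _ _
      simp at this; rcases this with h' | h' <;> [exact hy12 h'; exact hz1 h'.symm]
    have d5 : ({y₁, z} : Finset α) ≠ {y₃, z} := by
      intro h; have : y₁ ∈ ({y₃, z} : Finset α) := h ▸ Finset.mem_insert_self _ _
      simp at this; rcases this with h' | h' <;> [exact hy13 h'; exact hz1 h'.symm]
    have d6 : ({y₂, z} : Finset α) ≠ {y₃, z} := by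
      intro h; have : y₂ ∈ ({y₃, z} : Finset α) := h ▸ Finset.mem_insert_self _ _
      simp at this; rcases this with h' | h' <;> [exact hy23 h'; exact hz2 h'.symm]
    rw [Finset.card_insert_of_notMem (by simp [d1, d2, d3]),
      Finset.card_insert_of_notMem (by simp [d4, d5]),
      Finset.card_insert_of_notMem (by simp [d6]), Finset.card_singleton]
  have hdisj : Disjoint (({y₁, y₂, y₃} : Finset α).powerset)
      ({({z} : Finset α), {y₁, z}, {y₂, z}, {y₃, z}} : Finset (Finset α)) := by
    rw [Finset.disjoint_left]
    intro S hS hS'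
    rw [Finset.mem_powerset] at hS
    simp only [Finset.mem_insert, Finset.mem_singleton] at hS'
    have hzS : z ∈ S := by
      rcases hS' with rfl | rfl | rfl | rfl <;> simp
    have := hS hzS
    simp only [Finset.mem_insert, Finset.mem_singleton] at this
    rcases this with h | h | h
    exacts [hz1 h, hz2 h, hz3 h]
  have hRHScard : (({y₁, y₂, y₃} : Finset α).powerset
      ∪ {({z} : Finset α), {y₁, z}, {y₂, z}, {y₃, z}}).card = 12 := by
    rw [Finset.card_union_of_disjoint hdisj, Finset.card_powerset, hycard, hE]
    norm_num
  -- conclude by cardinality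
  have hdeg := hdelta x hx
  have hlc : 12 ≤ (link F x).card := by rw [card_link']; exact hdeg
  exact Finset.eq_of_subset_of_card_le hsub (by omega)
end

section
/- For all integers d ≥ 50, the quantity h(d) = ∑_{H ∈ R(d−1)} (1/(d−|H|) − 1/d) is less than 1/18, where R(d−1) is the family of the first d−1 finite subsets of ℕ⁺ in colexicographic order. -/
/-!
Every term equals `|H| / (d (d - |H|))`. A set `H` among the first `d - 1` in colex order
is the set of binary digits of some `k < d - 1 ≤ 2 ^ L` with `L = ⌈log₂ (d - 1)⌉`, so `|H| ≤ L`
and `h(d) ≤ (d - 1) L / (d (d - L))`, which is below `1 / 18` as soon as `19 L ≤ d`, i.e. for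
`d ≥ 152`. The remaining values `50 ≤ d ≤ 151` are checked by exact rational arithmetic.
-/

open Finset

lemma mem_decodeSet {k i : ℕ} : i + 1 ∈ decodeSet k ↔ k.testBit i := by
  simp only [decodeSet, mem_image, mem_filter, mem_range, Nat.add_right_cancel_iff,
    exists_eq_right, and_iff_right_iff_imp]
  intro h
  exact (Nat.lt_two_pow_self).trans_le (Nat.ge_two_pow_of_testBit h) |>.trans_le (by omega)

lemma decodeSet_subset_of_lt_two_pow {k n : ℕ} (h : k < 2 ^ n) :
    decodeSet k ⊆ (range n).image (· + 1) := by
  simp only [decodeSet, subset_iff, mem_image, mem_filter, mem_range]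
  rintro _ ⟨i, ⟨-, hi⟩, rfl⟩
  refine ⟨i, ?_, rfl⟩
  by_contra! hni
  exact absurd hi (by simp [Nat.testBit_lt_two_pow (h.trans_le (Nat.pow_le_pow_right two_pos hni))])

lemma card_decodeSet_le {k n : ℕ} (h : k < 2 ^ n) : (decodeSet k).card ≤ n :=
  (card_le_card (decodeSet_subset_of_lt_two_pow h)).trans (card_image_le.trans (card_range n).le)

lemma sum_Rfam {M : Type*} [AddCommMonoid M] (m : ℕ) (f : Finset ℕ → M) :
    ∑ H ∈ Rfam m, f H = ∑ k ∈ range m, f (decodeSet k) :=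
  sum_image fun _ _ _ _ h => decodeSet_injective h

lemma sum_Rfam_le_of_le_two_pow {d L : ℕ} (hLd : L < d) (hpow : d - 1 ≤ 2 ^ L) :
    ∑ H ∈ Rfam (d - 1), ((1 : ℝ) / ((d : ℝ) - H.card) - 1 / d) ≤
      ((d : ℝ) - 1) * (1 / ((d : ℝ) - L) - 1 / d) := by
  have hLd' : (L : ℝ) < d := by exact_mod_cast hLd
  have hterm : ∀ k ∈ range (d - 1),
      (1 : ℝ) / ((d : ℝ) - (decodeSet k).card) - 1 / d ≤ 1 / ((d : ℝ) - L) - 1 / d := by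
    intro k hk
    have hc : ((decodeSet k).card : ℝ) ≤ L :=
      mod_cast card_decodeSet_le ((mem_range.mp hk).trans_le hpow)
    have : (0 : ℝ) < d - (decodeSet k).card := by linarith
    gcongr
  calc _ = ∑ k ∈ range (d - 1), ((1 : ℝ) / ((d : ℝ) - (decodeSet k).card) - 1 / d) :=
        sum_Rfam _ _
    _ ≤ (d - 1 : ℕ) • (1 / ((d : ℝ) - L) - 1 / d) := by
        simpa using sum_le_card_nsmul _ _ _ hterm
    _ = _ := by rw [nsmul_eq_mul, Nat.cast_pred (by omega)]

lemma sub_one_mul_inv_sub_lt {d L : ℝ} (hL : 1 ≤ L) (h19 : 19 * L ≤ d) :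
    (d - 1) * (1 / (d - L) - 1 / d) < 1 / 18 := by
  have hd : 0 < d := by linarith
  have hdL : 0 < d - L := by linarith
  rw [div_sub_div _ _ hdL.ne' hd.ne', mul_div_assoc', div_lt_div_iff₀ (by positivity) (by norm_num)]
  nlinarith

lemma nineteen_mul_le_two_pow_pred {n : ℕ} (hn : 9 ≤ n) : 19 * n ≤ 2 ^ (n - 1) + 1 := by
  induction n, hn using Nat.le_induction with
  | base => norm_num
  | succ m hm ih =>
    obtain ⟨j, rfl⟩ : ∃ j, m = j + 1 := ⟨m - 1, by omega⟩
    have : 32 ≤ 2 ^ j := (Nat.pow_le_pow_right two_pos (by omega : 5 ≤ j)).trans_eq' rfl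
    simp only [Nat.add_sub_cancel, pow_succ] at ih ⊢
    omega

lemma nineteen_mul_clog_le {d : ℕ} (hd : 152 ≤ d) : 19 * Nat.clog 2 (d - 1) ≤ d := by
  by_cases hL : Nat.clog 2 (d - 1) ≤ 8
  · omega
  · have := Nat.pow_pred_clog_lt_self one_lt_two (by omega : 1 < d - 1)
    rw [Nat.pred_eq_sub_one] at this
    have := nineteen_mul_le_two_pow_pred (by omega : 9 ≤ Nat.clog 2 (d - 1))
    omega

lemma sum_decodeSet_lt_of_mem_Icc : ∀ d ∈ Icc 50 151,
    ∑ k ∈ range (d - 1), ((1 : ℚ) / ((d : ℚ) - (decodeSet k).card) - 1 / d) < 1 / 18 := by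
  decide +kernel

/-- for `d ≥ 50`, `h(d) = ∑_{H ∈ R(d-1)} (1/(d-|H|) - 1/d) < 1/18`. -/
theorem stmt_19 (d : ℕ) (hd : 50 ≤ d) :
    ∑ H ∈ Rfam (d - 1), ((1 : ℝ) / ((d : ℝ) - H.card) - 1 / d) < 1 / 18 := by
  rcases lt_or_ge d 152 with hsmall | hlarge
  · have hq := sum_decodeSet_lt_of_mem_Icc d (mem_Icc.mpr ⟨hd, by omega⟩)
    have hr := (Rat.cast_lt (K := ℝ)).mpr hq
    push_cast at hr
    rwa [sum_Rfam]
  · set L := Nat.clog 2 (d - 1)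
    have h19 := nineteen_mul_clog_le hlarge
    have hL : 1 ≤ L := Nat.clog_pos one_lt_two (by omega)
    refine (sum_Rfam_le_of_le_two_pow (by omega) (Nat.le_pow_clog one_lt_two _)).trans_lt ?_
    exact sub_one_mul_inv_sub_lt (mod_cast hL) (mod_cast h19)
end
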